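/- (Lemma 1, part 1) Every eigenvalue of U is simple: for every λ ∈ [0,2π) with e^{iλ} ∈ σ(U), dim ker(U − e^{iλ}) = 1. -/

import Mathlib

open scoped Real

/-- The coin matrix `C = e^{iΔ}[[α, β], [−conj β, conj α]]`. -/
noncomputable def coinM (a b : ℂ) (d : ℝ) : Matrix (Fin 2) (Fin 2) ℂ :=
  Complex.exp (Complex.I * d) • !![a, b; -(starRingEnd ℂ b), starRingEnd ℂ a]

/-- The transfer matrix `T(λ) = (1/α)[[e^{i(λ−Δ)}, −β], [−conj β, e^{−i(λ−Δ)}]]`. -/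
noncomputable def transferM (a b : ℂ) (d l : ℝ) : Matrix (Fin 2) (Fin 2) ℂ :=
  a⁻¹ • !![Complex.exp (Complex.I * (l - d)), -b;
           -(starRingEnd ℂ b), Complex.exp (-(Complex.I * (l - d)))]

/-- Square-summability of `Ψ : ℤ → ℂ²`, i.e. `Σ_{x∈ℤ} ‖Ψ(x)‖²_{ℂ²} < ∞`. -/
def SqSummable (Ψ : ℤ → Fin 2 → ℂ) : Prop :=
  Summable fun x : ℤ => ‖Ψ x 0‖ ^ 2 + ‖Ψ x 1‖ ^ 2

/-- The time evolution `U = SC`:  `(UΨ)(x) = ((C_{x+1}Ψ(x+1))_L, (C_{x−1}Ψ(x−1))_R)ᵀ`. -/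
noncomputable def Uact (C : ℤ → Matrix (Fin 2) (Fin 2) ℂ) (Ψ : ℤ → Fin 2 → ℂ) :
    ℤ → Fin 2 → ℂ :=
  fun x => ![(C (x + 1)).mulVec (Ψ (x + 1)) 0, (C (x - 1)).mulVec (Ψ (x - 1)) 1]

/-- The inverse of the unitary `J`:  `(J⁻¹Ψ)(x) = (Ψ_L(x+1), Ψ_R(x))ᵀ`. -/
def JinvAct (Ψ : ℤ → Fin 2 → ℂ) : ℤ → Fin 2 → ℂ := fun x => ![Ψ (x + 1) 0, Ψ x 1]

/-- Ordered product `∏_{i=0}^{n-1} T_i = T_{n-1} ⋯ T_1 T_0`. -/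
noncomputable def prodRev (T : ℕ → Matrix (Fin 2) (Fin 2) ℂ) : ℕ → Matrix (Fin 2) (Fin 2) ℂ
  | 0 => 1
  | n + 1 => T n * prodRev T n

/-- `T_{n−1} T_{n−2} ⋯ T_1 T_0` for matrices indexed by `ℤ`. -/
noncomputable def prodZpos (T : ℤ → Matrix (Fin 2) (Fin 2) ℂ) :
    ℕ → Matrix (Fin 2) (Fin 2) ℂ
  | 0 => 1
  | n + 1 => T n * prodZpos T n

/-- `T_{−n}⁻¹ T_{−n+1}⁻¹ ⋯ T_{−2}⁻¹ T_{−1}⁻¹` for matrices indexed by `ℤ`. -/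
noncomputable def prodZneg (T : ℤ → Matrix (Fin 2) (Fin 2) ℂ) :
    ℕ → Matrix (Fin 2) (Fin 2) ℂ
  | 0 => 1
  | n + 1 => (T (-(n + 1 : ℕ)))⁻¹ * prodZneg T n

/-- `A = (1/2)·α_0⋯α_{n−1}·tr(∏_{i=0}^{n−1} T_i)` (a real number, taken via its real part). -/
noncomputable def Adef (αs : ℕ → ℂ) (Ts : ℕ → Matrix (Fin 2) (Fin 2) ℂ) (n : ℕ) : ℝ :=
  ((1 / 2 : ℂ) * (∏ i ∈ Finset.range n, αs i) * (prodRev Ts n).trace).re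

/-- `ζ^< = (A − sgn(A)·√(A² − |α_0|²⋯|α_{n−1}|²))/(α_0⋯α_{n−1})`. -/
noncomputable def zetaLT (αs : ℕ → ℂ) (Ts : ℕ → Matrix (Fin 2) (Fin 2) ℂ) (n : ℕ) : ℂ :=
  ((Adef αs Ts n : ℂ) -
      ((Real.sign (Adef αs Ts n) *
        Real.sqrt ((Adef αs Ts n) ^ 2 - ∏ i ∈ Finset.range n, ‖αs i‖ ^ 2) : ℝ) : ℂ)) /
    ∏ i ∈ Finset.range n, αs i

/-- `ζ^> = (A + sgn(A)·√(A² − |α_0|²⋯|α_{n−1}|²))/(α_0⋯α_{n−1})`. -/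
noncomputable def zetaGT (αs : ℕ → ℂ) (Ts : ℕ → Matrix (Fin 2) (Fin 2) ℂ) (n : ℕ) : ℂ :=
  ((Adef αs Ts n : ℂ) +
      ((Real.sign (Adef αs Ts n) *
        Real.sqrt ((Adef αs Ts n) ^ 2 - ∏ i ∈ Finset.range n, ‖αs i‖ ^ 2) : ℝ) : ℂ)) /
    ∏ i ∈ Finset.range n, αs i

/-- The eigenspace `ker(U − c)` inside `ℓ²(ℤ;ℂ²)`, as a subspace of the space of
`ℂ²`-valued sequences. -/
noncomputable def eigSubmodule (C : ℤ → Matrix (Fin 2) (Fin 2) ℂ) (c : ℂ) :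
    Submodule ℂ (ℤ → Fin 2 → ℂ) where
  carrier := {Ψ | SqSummable Ψ ∧ Uact C Ψ = c • Ψ}
  zero_mem' := by
    constructor
    · have h : (fun x : ℤ => ‖(0 : ℤ → Fin 2 → ℂ) x 0‖ ^ 2 + ‖(0 : ℤ → Fin 2 → ℂ) x 1‖ ^ 2) =
          fun _ => (0 : ℝ) := by funext x; simp
      unfold SqSummable
      rw [h]
      exact summable_zero
    · funext x i
      fin_cases i <;> simp [Uact]
  add_mem' := by
    intro f g hf hg
    constructor
    · have hb : ∀ x : ℤ, ‖(f + g) x 0‖ ^ 2 + ‖(f + g) x 1‖ ^ 2 ≤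
          2 * ((‖f x 0‖ ^ 2 + ‖f x 1‖ ^ 2) + (‖g x 0‖ ^ 2 + ‖g x 1‖ ^ 2)) := by
        intro x
        have h0 := norm_add_le (f x 0) (g x 0)
        have h1 := norm_add_le (f x 1) (g x 1)
        simp only [Pi.add_apply]
        nlinarith [norm_nonneg (f x 0), norm_nonneg (g x 0), norm_nonneg (f x 1),
          norm_nonneg (g x 1), sq_nonneg (‖f x 0‖ - ‖g x 0‖), sq_nonneg (‖f x 1‖ - ‖g x 1‖),
          norm_nonneg (f x 0 + g x 0), norm_nonneg (f x 1 + g x 1)]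
      exact Summable.of_nonneg_of_le (fun x => by positivity) hb ((hf.1.add hg.1).mul_left 2)
    · have hUadd : Uact C (f + g) = Uact C f + Uact C g := by
        funext x i
        fin_cases i <;> simp [Uact, Matrix.mulVec_add]
      rw [hUadd, hf.2, hg.2, ← smul_add]
  smul_mem' := by
    intro a f hf
    constructor
    · have h : (fun x : ℤ => ‖(a • f) x 0‖ ^ 2 + ‖(a • f) x 1‖ ^ 2) =
          fun x : ℤ => ‖a‖ ^ 2 * (‖f x 0‖ ^ 2 + ‖f x 1‖ ^ 2) := by
        funext x
        simp [norm_smul, mul_pow, mul_add]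
      unfold SqSummable
      rw [h]
      exact hf.1.mul_left _
    · have hUsmul : Uact C (a • f) = a • Uact C f := by
        funext x i
        fin_cases i <;> simp [Uact, Matrix.mulVec_smul]
      rw [hUsmul, hf.2, smul_comm]

/-!
An eigenvector `Ψ` for `e^{il}` is determined by the pair `(Ψ_L(x), Ψ_R(x+1))` at any one site:
the eigenvalue equation says that these pairs satisfy `v(x) = T_x v(x-1)` with the transfer
matrices `T_x = transferM`, which are invertible because `det T_x = conj α_x / α_x`. For two
eigenvectors, the Wronskian of their pairs is multiplied by `det T_x` at each step, so its modulus
is constant in `x`; square-summability makes it tend to zero, so it vanishes. The two pairs are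
then proportional at one site, hence everywhere, and the eigenspace is a line.
-/

open Filter Topology Matrix

section Wronskian

variable {R : Type*} [CommRing R]

def wronskian (v w : Fin 2 → R) : R := v 0 * w 1 - v 1 * w 0

theorem wronskian_mulVec (M : Matrix (Fin 2) (Fin 2) R) (v w : Fin 2 → R) :
    wronskian (M *ᵥ v) (M *ᵥ w) = M.det * wronskian v w := by
  simp only [wronskian, mulVec, dotProduct, Fin.sum_univ_two, det_fin_two]
  ring

end Wronskian

theorem exists_eq_smul_of_wronskian_eq_zero {K : Type*} [Field K] {v w : Fin 2 → K}
    (hv : v ≠ 0) (h : wronskian v w = 0) : ∃ c : K, w = c • v := by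
  unfold wronskian at h
  by_cases h0 : v 0 = 0
  · have h1 : v 1 ≠ 0 := fun h1 => hv (by ext i; fin_cases i <;> assumption)
    refine ⟨w 1 / v 1, ?_⟩
    ext i; fin_cases i
    · have : v 1 * w 0 = 0 := by simpa [h0] using h
      simp [h0, (mul_eq_zero.1 this).resolve_left h1]
    · simp [h1]
  · refine ⟨w 0 / v 0, ?_⟩
    ext i; fin_cases i
    · simp [h0]
    · simp only [Fin.mk_one, Fin.isValue, Pi.smul_apply, smul_eq_mul]
      field_simp
      linear_combination h

theorem eq_zero_of_mulVec_recurrence {n R : Type*} [Fintype n] [DecidableEq n] [CommRing R]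
    {M : ℤ → Matrix n n R} {v : ℤ → n → R} (hM : ∀ x, IsUnit (M x).det)
    (hv : ∀ x, v x = M x *ᵥ v (x - 1)) {x₀ : ℤ} (h₀ : v x₀ = 0) : v = 0 := by
  refine funext fun x => ?_
  show v x = 0
  induction x using Int.inductionOn' (b := x₀) with
  | zero => exact h₀
  | succ k _ ih => rw [hv, add_sub_cancel_right, ih, mulVec_zero]
  | pred k _ ih =>
    have h := congrArg ((M k)⁻¹ *ᵥ ·) ((hv k).symm.trans ih)
    simpa [mulVec_mulVec, nonsing_inv_mul _ (hM k)] using h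

theorem eq_zero_of_norm_eq_of_tendsto_cofinite {E : Type*} [NormedAddCommGroup E] {f : ℤ → E}
    (hf : ∀ x, ‖f x‖ = ‖f (x - 1)‖) (h : Tendsto f cofinite (𝓝 0)) : f = 0 := by
  have hconst : ∀ x, ‖f x‖ = ‖f 0‖ := by
    intro x
    induction x using Int.induction_on with
    | zero => rfl
    | succ n ih => rw [hf, add_sub_cancel_right, ih]
    | pred n ih => rw [← ih, hf (-n)]
  have h0 : ‖f 0‖ = 0 :=
    tendsto_nhds_unique (tendsto_const_nhds.congr fun x => (hconst x).symm)
      (by simpa only [norm_zero] using h.norm)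
  funext x
  exact norm_eq_zero.1 ((hconst x).trans h0)

theorem SqSummable.tendsto_cofinite_zero {Ψ : ℤ → Fin 2 → ℂ} (h : SqSummable Ψ) :
    Tendsto Ψ cofinite (𝓝 0) := by
  refine tendsto_pi_nhds.2 fun i => squeeze_zero_norm (fun x => ?_)
    (by simpa using (Summable.tendsto_cofinite_zero h).sqrt)
  refine Real.le_sqrt_of_sq_le ?_
  fin_cases i
  · exact le_add_of_nonneg_right (sq_nonneg _)
  · exact le_add_of_nonneg_left (sq_nonneg _)

section TransferMatrix

variable {a b : ℂ} {d l : ℝ}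

theorem norm_det_transferM (ha : a ≠ 0) (hab : ‖a‖ ^ 2 + ‖b‖ ^ 2 = 1) :
    ‖(transferM a b d l).det‖ = 1 := by
  have hexp : Complex.exp (Complex.I * (l - d)) * Complex.exp (-(Complex.I * (l - d))) = 1 := by
    rw [← Complex.exp_add, add_neg_cancel, Complex.exp_zero]
  have hab' : (‖a‖ : ℂ) ^ 2 + (‖b‖ : ℂ) ^ 2 = 1 := by exact_mod_cast hab
  have hdet : (transferM a b d l).det = a⁻¹ ^ 2 * ‖a‖ ^ 2 := by
    simp only [transferM, det_smul, det_fin_two_of, Fintype.card_fin, hexp]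
    linear_combination -(a⁻¹ ^ 2) * hab' - a⁻¹ ^ 2 * Complex.mul_conj' b
  rw [hdet]
  simp [ha]

theorem transferM_mulVec_of_coinM_mulVec (ha : a ≠ 0) (hab : ‖a‖ ^ 2 + ‖b‖ ^ 2 = 1)
    {w : Fin 2 → ℂ} {u v : ℂ}
    (hu : (coinM a b d *ᵥ w) 0 = Complex.exp (Complex.I * l) * u)
    (hv : (coinM a b d *ᵥ w) 1 = Complex.exp (Complex.I * l) * v) :
    transferM a b d l *ᵥ ![u, w 1] = ![w 0, v] := by
  have hn : starRingEnd ℂ a * a + starRingEnd ℂ b * b = 1 := by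
    rw [Complex.conj_mul', Complex.conj_mul']; exact_mod_cast hab
  have hexp : Complex.exp (Complex.I * (l - d)) =
      Complex.exp (Complex.I * l) / Complex.exp (Complex.I * d) := by
    rw [← Complex.exp_sub]; ring_nf
  have hexp' : Complex.exp (-(Complex.I * (l - d))) =
      Complex.exp (Complex.I * d) / Complex.exp (Complex.I * l) := by
    rw [← Complex.exp_sub]; ring_nf
  have hd := Complex.exp_ne_zero (Complex.I * d)
  have hl := Complex.exp_ne_zero (Complex.I * l)
  simp only [coinM, mulVec, dotProduct, Fin.sum_univ_two, Matrix.smul_apply, of_apply, cons_val',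
    cons_val_zero, cons_val_one, cons_val_fin_one, smul_eq_mul] at hu hv
  ext i; fin_cases i
  · simp only [transferM, hexp, Fin.zero_eta,
      mulVec, dotProduct, Fin.sum_univ_two, Matrix.smul_apply, of_apply, cons_val',
      cons_val_zero, cons_val_one, cons_val_fin_one, smul_eq_mul]
    field_simp
    linear_combination -hu
  · simp only [transferM, hexp', Fin.mk_one,
      mulVec, dotProduct, Fin.sum_univ_two, Matrix.smul_apply, of_apply, cons_val',
      cons_val_zero, cons_val_one, cons_val_fin_one, smul_eq_mul]
    field_simp
    linear_combination a * hv + starRingEnd ℂ b * hu - Complex.exp (Complex.I * d) * w 1 * hn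

end TransferMatrix

-- `C_x Ψ(x) = e^{il} (Ψ_L(x-1), Ψ_R(x+1))`, so this pair at `x` is determined by the one at `x-1`.
def transferVec {R : Type*} [Semiring R] : (ℤ → Fin 2 → R) →ₗ[R] ℤ → Fin 2 → R where
  toFun Ψ x := ![Ψ x 0, Ψ (x + 1) 1]
  map_add' Ψ Φ := by ext x i; fin_cases i <;> rfl
  map_smul' c Ψ := by ext x i; fin_cases i <;> rfl

@[simp]
theorem transferVec_apply {R : Type*} [Semiring R] (Ψ : ℤ → Fin 2 → R) (x : ℤ) :
    transferVec Ψ x = ![Ψ x 0, Ψ (x + 1) 1] :=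
  rfl

theorem SqSummable.tendsto_transferVec {Ψ : ℤ → Fin 2 → ℂ} (h : SqSummable Ψ) :
    Tendsto (transferVec Ψ) cofinite (𝓝 0) := by
  have hshift : Tendsto (· + 1 : ℤ → ℤ) cofinite cofinite :=
    (add_left_injective 1).tendsto_cofinite
  refine tendsto_pi_nhds.2 fun i => ?_
  fin_cases i
  · exact tendsto_pi_nhds.1 h.tendsto_cofinite_zero 0
  · exact (tendsto_pi_nhds.1 h.tendsto_cofinite_zero 1).comp hshift

section Walk

variable {α β : ℤ → ℂ} {Δ : ℤ → ℝ} {l : ℝ}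

theorem transferVec_eq_transferM_mulVec {Ψ : ℤ → Fin 2 → ℂ}
    (hΨ : Uact (fun x => coinM (α x) (β x) (Δ x)) Ψ = Complex.exp (Complex.I * l) • Ψ) {x : ℤ}
    (hα : α x ≠ 0) (hαβ : ‖α x‖ ^ 2 + ‖β x‖ ^ 2 = 1) :
    transferVec Ψ x = transferM (α x) (β x) (Δ x) l *ᵥ transferVec Ψ (x - 1) := by
  have hu := congrFun (congrFun hΨ (x - 1)) 0
  have hv := congrFun (congrFun hΨ (x + 1)) 1
  simp only [Uact, sub_add_cancel, add_sub_cancel_right, Pi.smul_apply, smul_eq_mul,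
    cons_val_zero, cons_val_one] at hu hv
  rw [transferVec_apply, transferVec_apply, sub_add_cancel]
  exact (transferM_mulVec_of_coinM_mulVec hα hαβ hu hv).symm

theorem eq_zero_of_transferVec_eq_zero (hα : ∀ x, α x ≠ 0)
    (hαβ : ∀ x, ‖α x‖ ^ 2 + ‖β x‖ ^ 2 = 1) {Ψ : ℤ → Fin 2 → ℂ}
    (hΨ : Uact (fun x => coinM (α x) (β x) (Δ x)) Ψ = Complex.exp (Complex.I * l) • Ψ) {x₀ : ℤ}
    (h₀ : transferVec Ψ x₀ = 0) : Ψ = 0 := by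
  have hdet : ∀ x, IsUnit (transferM (α x) (β x) (Δ x) l).det := fun x => by
    rw [isUnit_iff_ne_zero, ← norm_ne_zero_iff, norm_det_transferM (hα x) (hαβ x)]
    exact one_ne_zero
  have hT := eq_zero_of_mulVec_recurrence hdet
    (fun x => transferVec_eq_transferM_mulVec hΨ (hα x) (hαβ x)) h₀
  ext x i
  fin_cases i
  · exact congrFun (congrFun hT x) 0
  · simpa using congrFun (congrFun hT (x - 1)) 1

theorem wronskian_transferVec_eq_zero (hα : ∀ x, α x ≠ 0)
    (hαβ : ∀ x, ‖α x‖ ^ 2 + ‖β x‖ ^ 2 = 1) {Ψ Φ : ℤ → Fin 2 → ℂ}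
    (hΨ : Ψ ∈ eigSubmodule (fun x => coinM (α x) (β x) (Δ x)) (Complex.exp (Complex.I * l)))
    (hΦ : Φ ∈ eigSubmodule (fun x => coinM (α x) (β x) (Δ x)) (Complex.exp (Complex.I * l)))
    (x : ℤ) : wronskian (transferVec Ψ x) (transferVec Φ x) = 0 := by
  have hstep : ∀ x, ‖wronskian (transferVec Ψ x) (transferVec Φ x)‖ =
      ‖wronskian (transferVec Ψ (x - 1)) (transferVec Φ (x - 1))‖ := fun x => by
    rw [transferVec_eq_transferM_mulVec hΨ.2 (hα x) (hαβ x),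
      transferVec_eq_transferM_mulVec hΦ.2 (hα x) (hαβ x), wronskian_mulVec, norm_mul,
      norm_det_transferM (hα x) (hαβ x), one_mul]
  have hdecay :
      Tendsto (fun x => wronskian (transferVec Ψ x) (transferVec Φ x)) cofinite (𝓝 0) := by
    have hcont : Continuous fun p : (Fin 2 → ℂ) × (Fin 2 → ℂ) => wronskian p.1 p.2 := by
      unfold wronskian; fun_prop
    simpa [wronskian, Function.comp_def] using (hcont.tendsto (0, 0)).comp
      (hΨ.1.tendsto_transferVec.prodMk_nhds hΦ.1.tendsto_transferVec)
  exact congrFun (eq_zero_of_norm_eq_of_tendsto_cofinite hstep hdecay) x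

theorem eigSubmodule_le_span_singleton (hα : ∀ x, α x ≠ 0)
    (hαβ : ∀ x, ‖α x‖ ^ 2 + ‖β x‖ ^ 2 = 1) {Ψ₀ : ℤ → Fin 2 → ℂ}
    (h₀ : Ψ₀ ∈ eigSubmodule (fun x => coinM (α x) (β x) (Δ x)) (Complex.exp (Complex.I * l)))
    (hne : Ψ₀ ≠ 0) :
    eigSubmodule (fun x => coinM (α x) (β x) (Δ x)) (Complex.exp (Complex.I * l)) ≤ ℂ ∙ Ψ₀ := by
  intro Ψ hΨ
  have hv₀ : transferVec Ψ₀ 0 ≠ 0 := fun h => hne (eq_zero_of_transferVec_eq_zero hα hαβ h₀.2 h)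
  obtain ⟨c, hc⟩ := exists_eq_smul_of_wronskian_eq_zero hv₀
    (wronskian_transferVec_eq_zero hα hαβ h₀ hΨ 0)
  have hdiff : Ψ - c • Ψ₀ = 0 := by
    have hmem := Submodule.sub_mem _ hΨ (Submodule.smul_mem _ c h₀)
    refine eq_zero_of_transferVec_eq_zero hα hαβ hmem.2 (x₀ := 0) ?_
    rw [map_sub, map_smul, Pi.sub_apply, Pi.smul_apply, hc, sub_self]
  exact Submodule.mem_span_singleton.2 ⟨c, (sub_eq_zero.1 hdiff).symm⟩

end Walk

theorem eigenvalue_simple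
    (α β : ℤ → ℂ) (Δ : ℤ → ℝ)
    (hα : ∀ x, α x ≠ 0)
    (hαβ : ∀ x, ‖α x‖ ^ 2 + ‖β x‖ ^ 2 = 1)
    (l : ℝ)
    (hσ : ∃ Ψ : ℤ → Fin 2 → ℂ, SqSummable Ψ ∧ Ψ ≠ 0 ∧
        Uact (fun x => coinM (α x) (β x) (Δ x)) Ψ = Complex.exp (Complex.I * l) • Ψ) :
    Module.rank ℂ
      (eigSubmodule (fun x => coinM (α x) (β x) (Δ x)) (Complex.exp (Complex.I * l))) = 1 := by
  obtain ⟨Ψ₀, hsum, hne, heig⟩ := hσ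
  exact (rank_submodule_eq_one_iff _).2
    ⟨Ψ₀, ⟨hsum, heig⟩, hne, eigSubmodule_le_span_singleton hα hαβ ⟨hsum, heig⟩ hne⟩
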